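/- Let n ≥ 2. The monoid RSP_n of restricted signed partitions of [±n] is presented by generators e_{i,j} for i < j in [±n] with j ≠ −i, subject to the relations (RSP1) e_{i,j}·e_{i,j} = e_{i,j}; (RSP2) e_{i,j}·e_{r,s} = e_{r,s}·e_{i,j} for all admissible i < j and r < s; (RSP3) e_{i,j}·e_{j,k} = e_{i,j}·e_{i,k} = e_{i,k}·e_{j,k} for all i < j < k in [±n] with j ≠ −i and k ≠ −j; (RSP4) e_{i,j} = e_{−j,−i} for all admissible i < j; i.e. there is a monoid isomorphism from this presented monoid to RSP_n sending e_{i,j} to ε_{i,j}. -/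

import Mathlib

instance setoidCommMonoid (α : Type*) : CommMonoid (Setoid α) where
  mul := (· ⊔ ·)
  one := ⊥
  mul_assoc := sup_assoc
  one_mul := bot_sup_eq
  mul_one := sup_bot_eq
  mul_comm := sup_comm

def muSet {α : Type*} (X : Set α) : Setoid α :=
  Relation.EqvGen.setoid (fun x y => x ∈ X ∧ y ∈ X)

def mu {α : Type*} (i j : α) : Setoid α := muSet {i, j}

/-- `[±n]`: nonzero integers of absolute value at most `n`, with the order from `ℤ`. -/
abbrev PM (n : ℕ) := {k : ℤ // k ≠ 0 ∧ |k| ≤ (n : ℤ)}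

namespace PM

/-- The negation involution `k ↦ -k` on `[±n]`. -/
def neg {n : ℕ} (x : PM n) : PM n :=
  ⟨-x.1, by obtain ⟨h1, h2⟩ := x.2; exact ⟨neg_ne_zero.mpr h1, by rwa [abs_neg]⟩⟩

@[simp] theorem neg_neg {n : ℕ} (x : PM n) : x.neg.neg = x := Subtype.ext (by simp [neg])

theorem neg_lt_neg {n : ℕ} {x y : PM n} (h : x < y) : y.neg < x.neg := by
  have h' : x.1 < y.1 := Subtype.coe_lt_coe.mpr h
  rw [← Subtype.coe_lt_coe]
  show -y.1 < -x.1
  omega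

theorem neg_lt_pos {n : ℕ} {x y : PM n} (hx : 0 < x.1) (hy : 0 < y.1) : x.neg < y := by
  rw [← Subtype.coe_lt_coe]
  show -x.1 < y.1
  omega

theorem pos_ne_neg {n : ℕ} {x y : PM n} (hx : 0 < x.1) (hy : 0 < y.1) : y ≠ x.neg := by
  intro h
  have : y.1 = -x.1 := congrArg Subtype.val h
  omega

theorem neg_lt_self {n : ℕ} {x : PM n} (hx : 0 < x.1) : x.neg < x := neg_lt_pos hx hx

/-- The absolute value map `x ↦ |x|` from `[±n]` to its positive part. -/
def abs {n : ℕ} (x : PM n) : PM n :=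
  ⟨|x.1|, by obtain ⟨h1, h2⟩ := x.2; exact ⟨abs_ne_zero.mpr h1, by rwa [abs_abs]⟩⟩

end PM

/-- Image of a subset of `[±n]` under negation. -/
def negSet {n : ℕ} (K : Set (PM n)) : Set (PM n) := PM.neg '' K

/-- The partition `I⁻` transported along negation: `x ∼ y` in `negPart I` iff `-x ∼ -y` in `I`. -/
def negPart {n : ℕ} (I : Setoid (PM n)) : Setoid (PM n) := Setoid.comap PM.neg I

/-- A set partition `I` of `[±n]` is *signed* if for every block `K` of `I` the set `-K` is
also a block; equivalently, `x ∼ y ↔ -x ∼ -y` for all `x, y`. -/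
def IsSigned {n : ℕ} (I : Setoid (PM n)) : Prop :=
  ∀ x y : PM n, I x y ↔ I (PM.neg x) (PM.neg y)

/-- A *zero block* of a partition `I` is a block `K` with `-K = K`. -/
def IsZeroBlock {n : ℕ} (I : Setoid (PM n)) (K : Set (PM n)) : Prop :=
  K ∈ I.classes ∧ negSet K = K

/-- A `Bₙ`-partition: a signed partition of `[±n]` with at most one zero block. -/
def IsBPart {n : ℕ} (I : Setoid (PM n)) : Prop :=
  IsSigned I ∧ Set.Subsingleton {K | IsZeroBlock I K}

/-- A *restricted* signed partition: all its zero blocks have more than two elements. -/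
def IsRestricted {n : ℕ} (I : Setoid (PM n)) : Prop :=
  IsSigned I ∧ ∀ K : Set (PM n), IsZeroBlock I K → 2 < K.ncard

/-- A `Dₙ`-partition: a `Bₙ`-partition whose zero block (if present) has more than two
elements. -/
def IsDPart {n : ℕ} (I : Setoid (PM n)) : Prop :=
  IsBPart I ∧ ∀ K : Set (PM n), IsZeroBlock I K → 2 < K.ncard

/-- For `i < j` in `[±n]`, the signed partition `ε_{i,j} = μ_{-j,-i} ⊔ μ_{i,j}`. -/
def eps {n : ℕ} (i j : PM n) : Setoid (PM n) := mu (PM.neg j) (PM.neg i) ⊔ mu i j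

theorem PM.neg_injective {n : ℕ} : Function.Injective (PM.neg : PM n → PM n) :=
  Function.LeftInverse.injective PM.neg_neg

theorem PM.neg_ne_neg_neg {n : ℕ} {i j : PM n} (hji : j ≠ PM.neg i) :
    PM.neg i ≠ PM.neg (PM.neg j) := by
  intro h
  apply hji
  rw [PM.neg_injective h, PM.neg_neg]

/-- Generators `e_{i,j}` for `i < j` in `[±n]` with `j ≠ -i`. -/
abbrev RGen (n : ℕ) := {p : PM n × PM n // p.1 < p.2 ∧ p.2 ≠ PM.neg p.1}

open FreeMonoid in
/-- The defining relations (RSP1)–(RSP4) of the monoid `RSPₙ`. -/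
inductive RSRel (n : ℕ) : FreeMonoid (RGen n) → FreeMonoid (RGen n) → Prop
  /-- (RSP1) `e_{i,j} e_{i,j} = e_{i,j}`. -/
  | RSP1 (a : RGen n) : RSRel n (of a * of a) (of a)
  /-- (RSP2) `e_{i,j} e_{r,s} = e_{r,s} e_{i,j}`. -/
  | RSP2 (a b : RGen n) : RSRel n (of a * of b) (of b * of a)
  /-- (RSP3), first equality: `e_{i,j} e_{j,k} = e_{i,j} e_{i,k}` for `i < j < k`,
  `j ≠ -i`, `k ≠ -j` (and `k ≠ -i`, so that `e_{i,k}` is a generator). -/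
  | RSP3a (i j k : PM n) (hij : i < j) (hjk : j < k)
      (hji : j ≠ PM.neg i) (hkj : k ≠ PM.neg j) (hki : k ≠ PM.neg i) :
      RSRel n (of ⟨(i, j), hij, hji⟩ * of ⟨(j, k), hjk, hkj⟩)
        (of ⟨(i, j), hij, hji⟩ * of ⟨(i, k), hij.trans hjk, hki⟩)
  /-- (RSP3), second equality: `e_{i,j} e_{j,k} = e_{i,k} e_{j,k}` for `i < j < k`,
  `j ≠ -i`, `k ≠ -j` (and `k ≠ -i`). -/
  | RSP3b (i j k : PM n) (hij : i < j) (hjk : j < k)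
      (hji : j ≠ PM.neg i) (hkj : k ≠ PM.neg j) (hki : k ≠ PM.neg i) :
      RSRel n (of ⟨(i, j), hij, hji⟩ * of ⟨(j, k), hjk, hkj⟩)
        (of ⟨(i, k), hij.trans hjk, hki⟩ * of ⟨(j, k), hjk, hkj⟩)
  /-- (RSP4) `e_{i,j} = e_{-j,-i}`. -/
  | RSP4 (i j : PM n) (hij : i < j) (hji : j ≠ PM.neg i) :
      RSRel n (of ⟨(i, j), hij, hji⟩)
        (of ⟨(PM.neg j, PM.neg i), PM.neg_lt_neg hij, PM.neg_ne_neg_neg hji⟩)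


/-!
Relations (RSP1) and (RSP2) make the presented monoid a commutative monoid of idempotents, and
`ε` respects all four relations, so it induces a homomorphism `φ` into the partition monoid.
To recover `x` from `φ x`, say that `x` absorbs an admissible pair `{u, v}` (`v ≠ -u`) when
`x · e_{u,v} = x`. Relation (RSP3), read in every order of `u, v, w`, makes absorption
transitive along `u, v, w` whenever `w ≠ -u`; consequently "linked by two absorbed pairs" is an
equivalence relation, and it is exactly `φ x`. Its shape shows that `φ x` is signed and that
every zero block `{u, -u, …}` contains a third element, and it shows that `φ y ≤ φ x` forces
`x · y = x`, whence injectivity. A restricted signed partition `I` is the image of the product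
of all generators `e_{i,j}` with `ε_{i,j} ≤ I`.
-/

namespace PM

variable {n : ℕ}

theorem neg_ne_self (x : PM n) : x.neg ≠ x := by
  intro h
  have : -x.1 = x.1 := congrArg Subtype.val h
  have := x.2.1
  omega

theorem ne_neg_comm {x y : PM n} (h : y ≠ x.neg) : x ≠ y.neg := by
  rintro rfl
  exact h (neg_neg y).symm

instance : Finite (PM n) :=
  ((Set.finite_Icc (-(n : ℤ)) n).subset fun _ hk => Set.mem_Icc.mpr (abs_le.mp hk.2)).to_subtype

end PM

theorem mu_comm {α : Type*} (i j : α) : mu i j = mu j i := by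
  rw [mu, mu, Set.pair_comm]

theorem mu_le_iff {α : Type*} {i j : α} {S : Setoid α} : mu i j ≤ S ↔ S i j := by
  refine ⟨fun h => h (Relation.EqvGen.rel i j ⟨by simp, by simp⟩), fun h => ?_⟩
  refine Setoid.eqvGen_le fun x y ⟨hx, hy⟩ => ?_
  rcases hx with rfl | rfl <;> rcases hy with rfl | rfl
  exacts [S.refl _, h, S.symm h, S.refl _]

section eps

variable {n : ℕ}

theorem eps_le_iff {i j : PM n} {S : Setoid (PM n)} :
    eps i j ≤ S ↔ S j.neg i.neg ∧ S i j := by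
  rw [eps, sup_le_iff, mu_le_iff, mu_le_iff]

theorem eps_rel (i j : PM n) : eps i j i j :=
  (eps_le_iff.mp le_rfl).2

theorem eps_comm (i j : PM n) : eps i j = eps j i := by
  rw [eps, eps, mu_comm j i, mu_comm i.neg j.neg, sup_comm]

theorem eps_neg (i j : PM n) : eps i j = eps j.neg i.neg := by
  rw [eps, eps, PM.neg_neg, PM.neg_neg, sup_comm]

theorem eps_le_trans {i j k : PM n} {S : Setoid (PM n)} (hij : eps i j ≤ S)
    (hjk : eps j k ≤ S) : eps i k ≤ S := by
  rw [eps_le_iff] at *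
  exact ⟨S.trans hjk.1 hij.1, S.trans hij.2 hjk.2⟩

theorem eps_sup_eps_eq_left (i j k : PM n) : eps i j ⊔ eps j k = eps i j ⊔ eps i k :=
  le_antisymm (sup_le le_sup_left (eps_le_trans (eps_comm i j ▸ le_sup_left) le_sup_right))
    (sup_le le_sup_left (eps_le_trans le_sup_left le_sup_right))

theorem eps_sup_eps_eq_right (i j k : PM n) : eps i j ⊔ eps j k = eps i k ⊔ eps j k :=
  le_antisymm (sup_le (eps_le_trans le_sup_left (eps_comm j k ▸ le_sup_right)) le_sup_right)
    (sup_le (eps_le_trans le_sup_left le_sup_right) le_sup_right)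

theorem eps_le_iff_of_isSigned {i j : PM n} {S : Setoid (PM n)} (hS : IsSigned S) :
    eps i j ≤ S ↔ S i j := by
  rw [eps_le_iff, ← hS]
  exact ⟨fun h => h.2, fun h => ⟨S.symm h, h⟩⟩

theorem exists_rgen_eps_eq {u v : PM n} (huv : u ≠ v) (hv : v ≠ u.neg) :
    ∃ a : RGen n, eps a.1.1 a.1.2 = eps u v := by
  rcases huv.lt_or_gt with h | h
  · exact ⟨⟨(u, v), h, hv⟩, rfl⟩
  · exact ⟨⟨(v, u), h, PM.ne_neg_comm hv⟩, eps_comm v u⟩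

end eps

theorem IsIdempotentElem.mul_eq_left_of_mul_mul_eq_left {M : Type*} [CommMonoid M] {x y z : M}
    (hy : IsIdempotentElem y) (h : x * (y * z) = x) : x * y = x :=
  calc x * y = x * (y * z) * y := by rw [h]
    _ = x * (y * y * z) := by ac_rfl
    _ = x := by rw [hy.eq, h]

theorem isRestricted_iff {n : ℕ} {I : Setoid (PM n)} (hI : IsSigned I) :
    IsRestricted I ↔ ∀ u, I u u.neg → ∃ t, t ≠ u ∧ t ≠ u.neg ∧ I u t := by
  refine ⟨fun hres u hu => ?_, fun h => ⟨hI, ?_⟩⟩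
  · have hzero : IsZeroBlock I {z | I z u} := by
      refine ⟨⟨u, rfl⟩, Set.ext fun z => ⟨?_, fun hz => ⟨z.neg, ?_, PM.neg_neg z⟩⟩⟩
      · rintro ⟨w, hw, rfl⟩
        exact I.trans ((hI w u).mp hw) (I.symm hu)
      · exact I.trans ((hI z u).mp hz) (I.symm hu)
    have hpair : ({u, u.neg} : Set (PM n)).ncard < {z | I z u}.ncard := by
      rw [Set.ncard_pair (PM.neg_ne_self u).symm]
      exact hres.2 _ hzero
    obtain ⟨t, ht, htu⟩ := Set.exists_mem_notMem_of_ncard_lt_ncard hpair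
    simp only [Set.mem_insert_iff, Set.mem_singleton_iff, not_or] at htu
    exact ⟨t, htu.1, htu.2, I.symm ht⟩
  · rintro K ⟨⟨y, rfl⟩, hK⟩
    have hy : I y.neg y := by
      have : y.neg ∈ negSet {z | I z y} := ⟨y, I.refl y, rfl⟩
      rwa [hK] at this
    obtain ⟨t, hty, hty', ht⟩ := h y (I.symm hy)
    exact (Set.two_lt_ncard_iff).mpr
      ⟨y, y.neg, t, I.refl y, hy, I.symm ht, (PM.neg_ne_self y).symm, hty.symm, hty'.symm⟩

namespace RSRel

open PresentedMonoid

variable {n : ℕ} {u v w : PM n}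

instance : CommMonoid (PresentedMonoid (RSRel n)) where
  mul_comm x y := by
    have hcomm : ∀ a ∈ Set.range (of (RSRel n)), ∀ b ∈ Set.range (of (RSRel n)),
        a * b = b * a := by
      rintro _ ⟨a, rfl⟩ _ ⟨b, rfl⟩
      exact mk_eq_mk_of_rel (RSP2 a b)
    have hcent := Submonoid.closure_le_centralizer_centralizer (Set.range (of (RSRel n)))
    rw [closure_range_of] at hcent
    exact Set.centralizer_centralizer_comm_of_comm hcomm x (hcent trivial) y (hcent trivial)

theorem isIdempotentElem (x : PresentedMonoid (RSRel n)) : IsIdempotentElem x := by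
  induction x using Submonoid.dense_induction _ (closure_range_of _) with
  | mem _ hx =>
    obtain ⟨a, rfl⟩ := hx
    exact mk_eq_mk_of_rel (RSP1 a)
  | one => exact IsIdempotentElem.one
  | mul x y hx hy => exact hx.mul hy

/-- The generator `e_{u,v}` of the unordered pair `{u, v}`, and `1` when `v = u` or `v = -u`. -/
noncomputable def pairGen (u v : PM n) : PresentedMonoid (RSRel n) :=
  if h : u < v ∧ v ≠ u.neg then of (RSRel n) ⟨(u, v), h⟩
  else if h' : v < u ∧ u ≠ v.neg then of (RSRel n) ⟨(v, u), h'⟩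
  else 1

theorem pairGen_of_lt (h : u < v) (hv : v ≠ u.neg) :
    pairGen u v = of (RSRel n) ⟨(u, v), h, hv⟩ :=
  dif_pos ⟨h, hv⟩

theorem pairGen_of_gt (h : v < u) (hu : u ≠ v.neg) :
    pairGen u v = of (RSRel n) ⟨(v, u), h, hu⟩ := by
  rw [pairGen, dif_neg (fun h' => lt_asymm h h'.1), dif_pos ⟨h, hu⟩]

theorem pairGen_self (u : PM n) : pairGen u u = 1 := by
  simp [pairGen]

theorem pairGen_neg_right (u : PM n) : pairGen u u.neg = 1 := by
  rw [pairGen, dif_neg fun h => h.2 rfl, dif_neg fun h => h.2 (PM.neg_neg u).symm]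

theorem pairGen_rgen (a : RGen n) : pairGen a.1.1 a.1.2 = of (RSRel n) a :=
  pairGen_of_lt a.2.1 a.2.2

theorem pairGen_comm (u v : PM n) : pairGen u v = pairGen v u := by
  by_cases hv : v = u.neg
  · subst hv
    rw [pairGen_neg_right, ← pairGen_neg_right u.neg, PM.neg_neg]
  · rcases lt_trichotomy u v with h | rfl | h
    · rw [pairGen_of_lt h hv, pairGen_of_gt h hv]
    · rfl
    · rw [pairGen_of_gt h (PM.ne_neg_comm hv), pairGen_of_lt h (PM.ne_neg_comm hv)]

theorem pairGen_neg (u v : PM n) : pairGen u.neg v.neg = pairGen u v := by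
  by_cases hv : v = u.neg
  · rw [hv, PM.neg_neg, pairGen_comm, pairGen_neg_right]
  rcases lt_trichotomy u v with h | rfl | h
  · have hv' : u.neg ≠ v.neg.neg := PM.neg_ne_neg_neg hv
    rw [pairGen_of_lt h hv, pairGen_of_gt (PM.neg_lt_neg h) hv']
    exact (mk_eq_mk_of_rel (RSP4 u v h hv)).symm
  · rw [pairGen_self, pairGen_self]
  · rw [pairGen_comm, pairGen_comm u]
    have hu := PM.ne_neg_comm hv
    rw [pairGen_of_lt h hu, pairGen_of_gt (PM.neg_lt_neg h) (PM.neg_ne_neg_neg hu)]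
    exact (mk_eq_mk_of_rel (RSP4 v u h hu)).symm

theorem pairGen_triangle_of_lt {i j k : PM n} (hij : i < j) (hjk : j < k) (hji : j ≠ i.neg)
    (hkj : k ≠ j.neg) (hki : k ≠ i.neg) :
    pairGen i j * pairGen j k * pairGen i k = pairGen i j * pairGen j k ∧
      pairGen i j * pairGen i k * pairGen j k = pairGen i j * pairGen i k ∧
      pairGen i k * pairGen j k * pairGen i j = pairGen i k * pairGen j k := by
  have hA : pairGen i j * pairGen j k = pairGen i j * pairGen i k := by
    rw [pairGen_of_lt hij hji, pairGen_of_lt hjk hkj, pairGen_of_lt (hij.trans hjk) hki]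
    exact mk_eq_mk_of_rel (RSP3a i j k hij hjk hji hkj hki)
  have hB : pairGen i j * pairGen j k = pairGen i k * pairGen j k := by
    rw [pairGen_of_lt hij hji, pairGen_of_lt hjk hkj, pairGen_of_lt (hij.trans hjk) hki]
    exact mk_eq_mk_of_rel (RSP3b i j k hij hjk hji hkj hki)
  refine ⟨?_, ?_, ?_⟩
  · rw [hA, mul_assoc, (isIdempotentElem _).eq]
  · rw [← hA, mul_assoc, (isIdempotentElem _).eq]
  · rw [← hB, mul_right_comm, (isIdempotentElem _).eq]

theorem pairGen_triangle (huv : u ≠ v) (hvw : v ≠ w) (huw : u ≠ w)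
    (hvu : v ≠ u.neg) (hwv : w ≠ v.neg) (hwu : w ≠ u.neg) :
    pairGen u v * pairGen v w * pairGen u w = pairGen u v * pairGen v w := by
  wlog h : u < w generalizing u w
  · have := this hvw.symm huv.symm huw.symm (PM.ne_neg_comm hwv) (PM.ne_neg_comm hvu)
      (PM.ne_neg_comm hwu) (lt_of_le_of_ne (not_lt.mp h) huw.symm)
    rwa [pairGen_comm w v, pairGen_comm v u, pairGen_comm w u, mul_comm (pairGen v w)] at this
  rcases huv.lt_or_gt with huv' | hvu'
  · rcases hvw.lt_or_gt with hvw' | hwv'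
    · exact (pairGen_triangle_of_lt huv' hvw' hvu hwv hwu).1
    · have := (pairGen_triangle_of_lt h hwv' hwu (PM.ne_neg_comm hwv) hvu).2.2
      rwa [pairGen_comm w v] at this
  · have := (pairGen_triangle_of_lt hvu' h (PM.ne_neg_comm hvu) hwu hwv).2.1
    rwa [pairGen_comm v u] at this

def Absorbs (x : PresentedMonoid (RSRel n)) (u v : PM n) : Prop :=
  v ≠ u.neg ∧ x * pairGen u v = x

theorem absorbs_self (x : PresentedMonoid (RSRel n)) (u : PM n) : Absorbs x u u :=
  ⟨(PM.neg_ne_self u).symm, by rw [pairGen_self, mul_one]⟩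

theorem Absorbs.symm (h : Absorbs x u v) : Absorbs x v u :=
  ⟨PM.ne_neg_comm h.1, by rw [pairGen_comm, h.2]⟩

theorem Absorbs.neg (h : Absorbs x u v) : Absorbs x u.neg v.neg :=
  ⟨PM.neg_ne_neg_neg (PM.ne_neg_comm h.1), by rw [pairGen_neg, h.2]⟩

theorem Absorbs.trans (huv : Absorbs x u v) (hvw : Absorbs x v w) (hwu : w ≠ u.neg) :
    Absorbs x u w := by
  rcases eq_or_ne u v with rfl | huv_ne
  · exact hvw
  rcases eq_or_ne v w with rfl | hvw_ne
  · exact huv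
  rcases eq_or_ne u w with rfl | huw_ne
  · exact absorbs_self x u
  refine ⟨hwu, ?_⟩
  calc x * pairGen u w = x * pairGen u v * pairGen v w * pairGen u w := by rw [huv.2, hvw.2]
    _ = x * (pairGen u v * pairGen v w * pairGen u w) := by simp only [mul_assoc]
    _ = x := by
      rw [pairGen_triangle huv_ne hvw_ne huw_ne huv.1 hvw.1 hwu, ← mul_assoc, huv.2, hvw.2]

def Linked (x : PresentedMonoid (RSRel n)) (u v : PM n) : Prop :=
  ∃ t, Absorbs x u t ∧ Absorbs x t v

theorem Absorbs.linked (h : Absorbs x u v) : Linked x u v :=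
  ⟨v, h, absorbs_self x v⟩

theorem Linked.absorbs (h : Linked x u v) (hv : v ≠ u.neg) : Absorbs x u v :=
  let ⟨_, hut, htv⟩ := h
  hut.trans htv hv

theorem Linked.symm (h : Linked x u v) : Linked x v u :=
  let ⟨t, hut, htv⟩ := h
  ⟨t, htv.symm, hut.symm⟩

theorem Linked.neg (h : Linked x u v) : Linked x u.neg v.neg :=
  let ⟨t, hut, htv⟩ := h
  ⟨t.neg, hut.neg, htv.neg⟩

theorem Absorbs.linked_trans (huv : Absorbs x u v) (hvw : Linked x v w) : Linked x u w := by
  obtain ⟨b, hvb, hbw⟩ := hvw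
  by_cases hb : b = u.neg
  · subst hb
    rcases eq_or_ne w v with rfl | hwv
    · exact huv.linked
    -- the path `u → -u → w` is rerouted as `u → -v → w`
    have hu_nv : Absorbs x u v.neg := by simpa using hvb.symm.neg
    exact ⟨v.neg, hu_nv, huv.neg.symm.trans hbw (by rwa [PM.neg_neg])⟩
  · exact ⟨b, huv.trans hvb hb, hbw⟩

theorem Linked.trans (huv : Linked x u v) (hvw : Linked x v w) : Linked x u w :=
  let ⟨_, hut, htv⟩ := huv
  hut.linked_trans (htv.linked_trans hvw)

def linkedSetoid (x : PresentedMonoid (RSRel n)) : Setoid (PM n) where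
  r := Linked x
  iseqv := ⟨fun u => (absorbs_self x u).linked, Linked.symm, Linked.trans⟩

theorem lift_eps_eq {w₁ w₂ : FreeMonoid (RGen n)} (h : RSRel n w₁ w₂) :
    FreeMonoid.lift (fun a : RGen n => eps a.1.1 a.1.2) w₁ =
      FreeMonoid.lift (fun a : RGen n => eps a.1.1 a.1.2) w₂ := by
  cases h with
  | RSP1 a => exact sup_idem _
  | RSP2 a b => exact sup_comm _ _
  | RSP3a i j k => exact eps_sup_eps_eq_left i j k
  | RSP3b i j k => exact eps_sup_eps_eq_right i j k
  | RSP4 i j => exact eps_neg i j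

def epsHom : PresentedMonoid (RSRel n) →* Setoid (PM n) :=
  PresentedMonoid.lift _ fun _ _ => lift_eps_eq

theorem epsHom_pairGen_rel (hv : v ≠ u.neg) : epsHom (pairGen u v) u v := by
  rcases lt_trichotomy u v with h | rfl | h
  · rw [pairGen_of_lt h hv]
    exact eps_rel u v
  · exact Setoid.refl' _ u
  · rw [pairGen_of_gt h (PM.ne_neg_comm hv)]
    exact Setoid.symm' _ (eps_rel v u)

theorem Absorbs.epsHom_rel (h : Absorbs x u v) : epsHom x u v := by
  have hle : epsHom (pairGen u v) ≤ epsHom x := by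
    rw [← h.2, map_mul]
    exact le_sup_right
  exact hle (epsHom_pairGen_rel h.1)

theorem epsHom_le_linkedSetoid_of_mul_eq (h : x * y = x) : epsHom y ≤ linkedSetoid x := by
  induction y using Submonoid.dense_induction _ (closure_range_of _) with
  | mem _ hy =>
    obtain ⟨a, rfl⟩ := hy
    have ha : Absorbs x a.1.1 a.1.2 := ⟨a.2.2, by rw [pairGen_rgen, h]⟩
    exact eps_le_iff.mpr ⟨ha.neg.symm.linked, ha.linked⟩
  | one => exact (map_one epsHom).symm ▸ bot_le
  | mul y z hy hz =>
    rw [map_mul]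
    refine sup_le (hy ((isIdempotentElem y).mul_eq_left_of_mul_mul_eq_left h)) (hz ?_)
    exact (isIdempotentElem z).mul_eq_left_of_mul_mul_eq_left (by rwa [mul_comm z y])

theorem epsHom_rel_iff : epsHom x u v ↔ Linked x u v :=
  ⟨fun h => epsHom_le_linkedSetoid_of_mul_eq (isIdempotentElem x).eq h,
    fun ⟨_, hut, htv⟩ => Setoid.trans' _ hut.epsHom_rel htv.epsHom_rel⟩

theorem isRestricted_epsHom (x : PresentedMonoid (RSRel n)) : IsRestricted (epsHom x) := by
  have hsigned : IsSigned (epsHom x) := fun u v => by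
    simp only [epsHom_rel_iff]
    exact ⟨Linked.neg, fun h => by simpa using h.neg⟩
  refine (isRestricted_iff hsigned).mpr fun u hu => ?_
  obtain ⟨t, hut, htu⟩ := epsHom_rel_iff.mp hu
  exact ⟨t, fun h => htu.1 (congrArg PM.neg h.symm), hut.1, hut.epsHom_rel⟩

theorem mul_eq_left_of_epsHom_le (h : epsHom y ≤ epsHom x) : x * y = x := by
  induction y using Submonoid.dense_induction _ (closure_range_of _) with
  | mem _ hy =>
    obtain ⟨a, rfl⟩ := hy
    rw [← pairGen_rgen]
    exact (epsHom_rel_iff.mp (h (eps_rel a.1.1 a.1.2))).absorbs a.2.2 |>.2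
  | one => exact mul_one x
  | mul y z hy hz =>
    rw [map_mul] at h
    rw [← mul_assoc, hy (le_sup_left.trans h), hz (le_sup_right.trans h)]

theorem epsHom_injective : Function.Injective (epsHom (n := n)) := fun x y h =>
  calc x = x * y := (mul_eq_left_of_epsHom_le h.ge).symm
    _ = y * x := mul_comm x y
    _ = y := mul_eq_left_of_epsHom_le h.le

theorem exists_epsHom_eq {I : Setoid (PM n)} (hI : IsRestricted I) : ∃ x, epsHom x = I := by
  classical
  have := Fintype.ofFinite (RGen n)
  set s := Finset.univ.filter fun a : RGen n => eps a.1.1 a.1.2 ≤ I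
  refine ⟨∏ a ∈ s, of (RSRel n) a, le_antisymm ?_ ?_⟩
  · rw [map_prod]
    exact Finset.prod_induction _ (· ≤ I) (fun _ _ => sup_le) bot_le
      fun a ha => (Finset.mem_filter.mp ha).2
  have hgen : ∀ u v, I u v → v ≠ u.neg → epsHom (∏ a ∈ s, of (RSRel n) a) u v := by
    intro u v huv hv
    rcases eq_or_ne u v with rfl | hne
    · exact Setoid.refl' _ u
    obtain ⟨a, ha⟩ := exists_rgen_eps_eq hne hv
    have has : a ∈ s := Finset.mem_filter.mpr
      ⟨Finset.mem_univ a, by rw [ha]; exact (eps_le_iff_of_isSigned hI.1).mpr huv⟩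
    have hle : eps u v ≤ epsHom (∏ a ∈ s, of (RSRel n) a) := by
      rw [← ha, ← Finset.mul_prod_erase s _ has, map_mul]
      exact le_sup_left
    exact hle (eps_rel u v)
  intro u v huv
  by_cases hv : v = u.neg
  · subst hv
    obtain ⟨t, htu, htu', hut⟩ := (isRestricted_iff hI.1).mp hI u huv
    exact Setoid.trans' _ (hgen u t hut htu')
      (hgen t u.neg (I.trans (I.symm hut) huv) (fun h => htu (PM.neg_injective h).symm))
  · exact hgen u v huv hv

end RSRel

theorem presentedMonoid_isomorphic_RSPn_general (n : ℕ) :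
    ∃ φ : PresentedMonoid (RSRel n) →* Setoid (PM n),
      Function.Injective φ ∧
      Set.range φ = {I | IsRestricted I} ∧
      ∀ a : RGen n, φ (PresentedMonoid.of (RSRel n) a) = eps a.1.1 a.1.2 :=
  ⟨RSRel.epsHom, RSRel.epsHom_injective,
    Set.ext fun _ =>
      ⟨fun ⟨x, hx⟩ => hx ▸ RSRel.isRestricted_epsHom x, RSRel.exists_epsHom_eq⟩,
    fun _ => rfl⟩

/-- The monoid `RSPₙ` of restricted signed partitions of `[±n]` is
presented by the generators `e_{i,j}` (for `i < j` in `[±n]` with `j ≠ -i`) subject to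
relations (RSP1)–(RSP4): there is an injective monoid homomorphism from the presented
monoid into the partition monoid of `[±n]`, sending `e_{i,j}` to `ε_{i,j}`, whose range
is exactly the set of restricted signed partitions. -/
theorem presentedMonoid_isomorphic_RSPn (n : ℕ) (hn : 2 ≤ n) :
    ∃ φ : PresentedMonoid (RSRel n) →* Setoid (PM n),
      Function.Injective φ ∧
      Set.range φ = {I | IsRestricted I} ∧
      ∀ a : RGen n, φ (PresentedMonoid.of (RSRel n) a) = eps a.1.1 a.1.2 :=
  presentedMonoid_isomorphic_RSPn_general n
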